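/- Let ρ_Λ = (Λ ⊗ id)(|φ⁺⟩⟨φ⁺|) be the Choi state of a unital CPTP map Λ on ℂ^{d_A} and ρ_T = I/d_A² the Choi state of the depolarizing map. Then G = (1 − 1/d_A²) − ‖ρ_Λ − ρ_T‖₂², where G = 1 − (1/d_A²)Tr[S(Λ⊗Λ)(S)] and ‖·‖₂ is the Hilbert–Schmidt norm. -/

import Mathlib

/-!
Write `J` for the Choi matrix of `Λ`. Complete positivity makes `J` Hermitian, which turns
`Tr[S (Λ ⊗ Λ)(S)]` into `Tr(J J) = ‖J‖₂²`. On the other side, `ρ_Λ` is `J / d` with its tensor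
factors swapped, so `‖ρ_Λ‖₂² = ‖J‖₂² / d²`, and trace preservation gives `Tr ρ_Λ = 1`; expanding
`‖ρ_Λ − I/d²‖₂²` therefore yields `‖J‖₂² / d² − 1 / d²`.
-/

open Matrix Kronecker BigOperators MeasureTheory ComplexOrder

noncomputable section

/-- The swap operator on `ℂ^{d_A} ⊗ ℂ^{d_A}`. -/
def swapOp (d : ℕ) : Matrix (Fin d × Fin d) (Fin d × Fin d) ℂ :=
  Matrix.of fun p q => if p.1 = q.2 ∧ p.2 = q.1 then 1 else 0

/-- The tensor product `Φ ⊗ Ψ` of two linear maps on `d × d` matrices, acting on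
operators over `ℂ^d ⊗ ℂ^d`. -/
def tensorOp (d : ℕ)
    (Φ Ψ : Matrix (Fin d) (Fin d) ℂ → Matrix (Fin d) (Fin d) ℂ)
    (M : Matrix (Fin d × Fin d) (Fin d × Fin d) ℂ) :
    Matrix (Fin d × Fin d) (Fin d × Fin d) ℂ :=
  Matrix.of fun p q => ∑ e : Fin d, ∑ f : Fin d, ∑ e' : Fin d, ∑ f' : Fin d,
    Φ (Matrix.single e f 1) p.1 q.1 * Ψ (Matrix.single e' f' 1) p.2 q.2 *
      M (e, e') (f, f')

/-- `G = 1 − (1/d²) Tr[S (Λ ⊗ Λ)(S)]` for a map `Λ` on `d × d` matrices. -/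
def GOfMap (d : ℕ) (Λ : Matrix (Fin d) (Fin d) ℂ → Matrix (Fin d) (Fin d) ℂ) : ℝ :=
  1 - (1 / (d : ℝ)^2) * (Matrix.trace (swapOp d * tensorOp d Λ Λ (swapOp d))).re

/-- The rank-one projector `|u⟩⟨u|` as a matrix. -/
def pureState (d : ℕ) (u : Fin d → ℂ) : Matrix (Fin d) (Fin d) ℂ :=
  Matrix.of fun a c => u a * star (u c)

/-- The density matrix `|φ⁺⟩⟨φ⁺|` of the maximally entangled state on `ℂ^d ⊗ ℂ^d`. -/
def phiPlusProj (d : ℕ) : Matrix (Fin d × Fin d) (Fin d × Fin d) ℂ :=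
  Matrix.of fun p q => if p.1 = p.2 ∧ q.1 = q.2 then ((d : ℂ))⁻¹ else 0

def choiMatrix {n R : Type*} [DecidableEq n] [Zero R] [One R]
    (Φ : Matrix n n R → Matrix n n R) : Matrix (n × n) (n × n) R :=
  Matrix.of fun p q => Φ (Matrix.single p.1 q.1 1) p.2 q.2

section
variable {n R : Type*} [Fintype n]

theorem trace_choiMatrix [DecidableEq n] [Semiring R] (Φ : Matrix n n R → Matrix n n R) :
    trace (choiMatrix Φ) = ∑ i, trace (Φ (single i i 1)) := by
  simp [trace, choiMatrix, Fintype.sum_prod_type]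

theorem trace_choiMatrix_of_trace_preserving [DecidableEq n] [Semiring R]
    (Φ : Matrix n n R → Matrix n n R) (hΦ : ∀ X, trace (Φ X) = trace X) :
    trace (choiMatrix Φ) = Fintype.card n := by
  simp [trace_choiMatrix, hΦ]

theorem trace_submatrix_equiv {m : Type*} [Fintype m] [AddCommMonoid R] (A : Matrix n n R)
    (e : m ≃ n) : trace (A.submatrix e e) = trace A :=
  e.sum_comp fun i => A i i

theorem trace_conjTranspose_mul_self_submatrix_equiv {m : Type*} [Fintype m] [Semiring R]
    [StarRing R] (A : Matrix n n R) (e : m ≃ n) :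
    trace ((A.submatrix e e)ᴴ * A.submatrix e e) = trace (Aᴴ * A) := by
  rw [conjTranspose_submatrix, submatrix_mul_equiv, trace_submatrix_equiv]

theorem trace_conjTranspose_mul_self_sub_smul_one [DecidableEq n] [CommRing R] [StarRing R]
    (A : Matrix n n R) (c : R) :
    trace ((A - c • 1)ᴴ * (A - c • 1)) =
      trace (Aᴴ * A) - c * star (trace A) - star c * trace A + star c * c * Fintype.card n := by
  simp [conjTranspose_sub, conjTranspose_smul, sub_mul, mul_sub, trace_sub, trace_conjTranspose]
  ring

end

section
variable {d : ℕ} (Φ : Matrix (Fin d) (Fin d) ℂ → Matrix (Fin d) (Fin d) ℂ)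

theorem swapOp_mul_apply (T : Matrix (Fin d × Fin d) (Fin d × Fin d) ℂ) (p q : Fin d × Fin d) :
    (swapOp d * T) p q = T p.swap q := by
  rw [Matrix.mul_apply, Fintype.sum_prod_type]
  simp [swapOp, ite_and, Prod.swap]

theorem tensorOp_swapOp_apply (p q : Fin d × Fin d) :
    tensorOp d Φ Φ (swapOp d) p q =
      ∑ e, ∑ f, Φ (single e f 1) p.1 q.1 * Φ (single f e 1) p.2 q.2 := by
  simp [tensorOp, swapOp, ite_and]

theorem trace_swapOp_mul_tensorOp_swapOp :
    trace (swapOp d * tensorOp d Φ Φ (swapOp d)) = trace (choiMatrix Φ * choiMatrix Φ) := by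
  simp only [trace, diag, swapOp_mul_apply]
  simp only [tensorOp_swapOp_apply, mul_apply, choiMatrix, of_apply, Fintype.sum_prod_type,
    Prod.fst_swap, Prod.snd_swap]
  rw [Finset.sum_comm]
  conv_rhs => rw [Finset.sum_comm]
  refine Finset.sum_congr rfl fun b _ => ?_
  rw [Finset.sum_comm]
  exact Finset.sum_congr rfl fun e _ => Finset.sum_comm

theorem tensorOp_id_phiPlusProj :
    tensorOp d Φ id (phiPlusProj d) =
      (d : ℂ)⁻¹ • (choiMatrix Φ).submatrix (Equiv.prodComm _ _) (Equiv.prodComm _ _) := by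
  ext p q
  simp [tensorOp, phiPlusProj, choiMatrix, Matrix.single, ite_and, mul_comm]

end

theorem trace_choiState_sub_depolarizing_sq {d : ℕ} (hd : (d : ℂ) ≠ 0)
    (Φ : Matrix (Fin d) (Fin d) ℂ → Matrix (Fin d) (Fin d) ℂ)
    (hΦ : ∀ X, trace (Φ X) = trace X) (hJ : (choiMatrix Φ).IsHermitian) :
    trace ((tensorOp d Φ id (phiPlusProj d) - ((d : ℂ) ^ 2)⁻¹ • 1)ᴴ *
      (tensorOp d Φ id (phiPlusProj d) - ((d : ℂ) ^ 2)⁻¹ • 1)) =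
      ((d : ℂ) ^ 2)⁻¹ * trace (choiMatrix Φ * choiMatrix Φ) - ((d : ℂ) ^ 2)⁻¹ := by
  have htrace : trace (tensorOp d Φ id (phiPlusProj d)) = 1 := by
    rw [tensorOp_id_phiPlusProj, trace_smul, trace_submatrix_equiv,
      trace_choiMatrix_of_trace_preserving Φ hΦ, Fintype.card_fin, smul_eq_mul, inv_mul_cancel₀ hd]
  rw [trace_conjTranspose_mul_self_sub_smul_one, htrace, tensorOp_id_phiPlusProj,
    conjTranspose_smul, smul_mul_smul_comm, trace_smul,
    trace_conjTranspose_mul_self_submatrix_equiv, hJ.eq]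
  simp only [star_inv₀, star_pow, star_natCast, star_one, smul_eq_mul, Fintype.card_prod,
    Fintype.card_fin, Nat.cast_mul]
  field_simp
  ring

theorem otoc_choi_distance_general (dA : ℕ) (hdA : 0 < dA)
    (Λ : Matrix (Fin dA) (Fin dA) ℂ →ₗ[ℂ] Matrix (Fin dA) (Fin dA) ℂ)
    (hCP : (Matrix.of fun p q : Fin dA × Fin dA =>
      Λ (Matrix.single p.1 q.1 1) p.2 q.2).PosSemidef)
    (hTP : ∀ X, Matrix.trace (Λ X) = Matrix.trace X) :
    GOfMap dA (fun X => Λ X) = (1 - 1 / (dA : ℝ)^2) -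
      (Matrix.trace
        ((tensorOp dA (fun X => Λ X) id (phiPlusProj dA) -
            (((dA : ℂ)^2)⁻¹ • 1))ᴴ *
         (tensorOp dA (fun X => Λ X) id (phiPlusProj dA) -
            (((dA : ℂ)^2)⁻¹ • 1)))).re := by
  have hd : (dA : ℂ) ≠ 0 := by exact_mod_cast hdA.ne'
  have hcast : ((dA : ℂ) ^ 2)⁻¹ = ((1 / (dA : ℝ) ^ 2 : ℝ) : ℂ) := by push_cast; ring
  rw [GOfMap, trace_swapOp_mul_tensorOp_swapOp,
    trace_choiState_sub_depolarizing_sq hd _ hTP hCP.isHermitian, hcast, Complex.sub_re,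
    Complex.re_ofReal_mul, Complex.ofReal_re]
  ring

/-- `G = (1 − 1/d_A²) − ‖ρ_Λ − ρ_T‖₂²`, where `ρ_Λ = (Λ ⊗ id)(|φ⁺⟩⟨φ⁺|)` is the Choi
state of the unital CPTP map `Λ` and `ρ_T = I/d_A²` that of the depolarizing map. -/
theorem otoc_choi_distance (dA : ℕ) (hdA : 0 < dA)
    (Λ : Matrix (Fin dA) (Fin dA) ℂ →ₗ[ℂ] Matrix (Fin dA) (Fin dA) ℂ)
    (hCP : (Matrix.of fun p q : Fin dA × Fin dA =>
      Λ (Matrix.single p.1 q.1 1) p.2 q.2).PosSemidef)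
    (hTP : ∀ X, Matrix.trace (Λ X) = Matrix.trace X)
    (hunital : Λ 1 = 1) :
    GOfMap dA (fun X => Λ X) = (1 - 1 / (dA : ℝ)^2) -
      (Matrix.trace
        ((tensorOp dA (fun X => Λ X) id (phiPlusProj dA) -
            (((dA : ℂ)^2)⁻¹ • 1))ᴴ *
         (tensorOp dA (fun X => Λ X) id (phiPlusProj dA) -
            (((dA : ℂ)^2)⁻¹ • 1)))).re :=
  otoc_choi_distance_general dA hdA Λ hCP hTP
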